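/- arXiv:2410.20786 — 2 statements merged into one kernel-verified Lean document; each statement's English description precedes it below -/
import Mathlib

section
/- Performance difference identity: in a finite discounted MDP, for any two policies π and π' and any signal F : S → A → ℝ, J_F(π') − J_F(π) = (1/(1−γ)) · ∑_s d_{π'}(s) ∑_a π' s a · A_F^π(s,a), where d_{π'} is the discounted state visitation distribution of π'. -/
open Real BigOperators

/-- Induced transition matrix of policy `pol`: `P_pol(s,s') = ∑ a, pol s a * P s a s'`. -/
noncomputable def transMat {S A : Type*} [Fintype A] (P : S → A → S → ℝ)
    (pol : S → A → ℝ) : Matrix S S ℝ :=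
  fun s s' => ∑ a, pol s a * P s a s'

/-- Discounted state visitation distribution
`d_pol(s) = (1-γ) ∑ₜ γ^t ∑_{s0} ρ0 s0 * (P_pol^t)(s0,s)`. -/
noncomputable def dVisit {S A : Type*} [Fintype S] [DecidableEq S] [Fintype A]
    (P : S → A → S → ℝ) (γ : ℝ) (ρ0 : S → ℝ) (pol : S → A → ℝ) (s : S) : ℝ :=
  (1 - γ) * ∑' t : ℕ, γ ^ t * ∑ s0, ρ0 s0 * (transMat P pol ^ t) s0 s

/-- Value function of signal `F` under policy `pol`. -/
noncomputable def Vfun {S A : Type*} [Fintype S] [DecidableEq S] [Fintype A]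
    (P : S → A → S → ℝ) (γ : ℝ) (F : S → A → ℝ) (pol : S → A → ℝ) (s : S) : ℝ :=
  ∑' t : ℕ, γ ^ t * ∑ s', (transMat P pol ^ t) s s' * ∑ a, pol s' a * F s' a

/-- Return `J_F(pol) = ∑ s, ρ0 s * V_F^pol(s)`. -/
noncomputable def Jret {S A : Type*} [Fintype S] [DecidableEq S] [Fintype A]
    (P : S → A → S → ℝ) (γ : ℝ) (ρ0 : S → ℝ) (F : S → A → ℝ) (pol : S → A → ℝ) : ℝ :=
  ∑ s, ρ0 s * Vfun P γ F pol s

/-- Action-value function `Q_F^pol(s,a) = F s a + γ ∑_{s'} P s a s' * V_F^pol(s')`. -/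
noncomputable def Qfun {S A : Type*} [Fintype S] [DecidableEq S] [Fintype A]
    (P : S → A → S → ℝ) (γ : ℝ) (F : S → A → ℝ) (pol : S → A → ℝ) (s : S) (a : A) : ℝ :=
  F s a + γ * ∑ s', P s a s' * Vfun P γ F pol s'

/-- Advantage function `A_F^pol(s,a) = Q_F^pol(s,a) - V_F^pol(s)`. -/
noncomputable def Adv {S A : Type*} [Fintype S] [DecidableEq S] [Fintype A]
    (P : S → A → S → ℝ) (γ : ℝ) (F : S → A → ℝ) (pol : S → A → ℝ) (s : S) (a : A) : ℝ :=
  Qfun P γ F pol s a - Vfun P γ F pol s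

/-- Expected surrogate advantage
`𝔸_F(pol,pol') = ∑ s, d_pol(s) ∑ a, pol' s a * A_F^pol(s,a)`. -/
noncomputable def surrAdv {S A : Type*} [Fintype S] [DecidableEq S] [Fintype A]
    (P : S → A → S → ℝ) (γ : ℝ) (ρ0 : S → ℝ) (F : S → A → ℝ)
    (pol pol' : S → A → ℝ) : ℝ :=
  ∑ s, dVisit P γ ρ0 pol s * ∑ a, pol' s a * Adv P γ F pol s a

/-- `ε_F(pol,pol') = max_s |∑ a, pol' s a * A_F^pol(s,a)|`. -/
noncomputable def epsAdv {S A : Type*} [Fintype S] [DecidableEq S] [Fintype A] [Nonempty S]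
    (P : S → A → S → ℝ) (γ : ℝ) (F : S → A → ℝ) (pol pol' : S → A → ℝ) : ℝ :=
  Finset.univ.sup' Finset.univ_nonempty fun s => |∑ a, pol' s a * Adv P γ F pol s a|

/-- Per-state KL divergence `KL(pol'‖pol)(s) = ∑ a, pol' s a * log (pol' s a / pol s a)`
(with the convention `0 * log 0 = 0`, automatic since `Real.log 0 = 0`). -/
noncomputable def klState {S A : Type*} [Fintype A] (pol' pol : S → A → ℝ) (s : S) : ℝ :=
  ∑ a, pol' s a * Real.log (pol' s a / pol s a)

/-- Averaged KL divergence `D̄_KL(pol'‖pol) = ∑ s, d_pol(s) * KL(pol'‖pol)(s)`. -/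
noncomputable def avgKL {S A : Type*} [Fintype S] [DecidableEq S] [Fintype A]
    (P : S → A → S → ℝ) (γ : ℝ) (ρ0 : S → ℝ) (pol' pol : S → A → ℝ) : ℝ :=
  ∑ s, dVisit P γ ρ0 pol s * klState pol' pol s


section helpers

variable {S A : Type*} [Fintype S] [DecidableEq S] [Fintype A]

lemma weighted_abs_le {ι : Type*} [Fintype ι] (w x : ι → ℝ) (hw0 : ∀ i, 0 ≤ w i)
    (hw1 : ∑ i, w i = 1) (C : ℝ) (hx : ∀ i, |x i| ≤ C) : |∑ i, w i * x i| ≤ C := by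
  calc |∑ i, w i * x i| ≤ ∑ i, |w i * x i| := Finset.abs_sum_le_sum_abs _ _
    _ ≤ ∑ i, w i * C := Finset.sum_le_sum fun i _ => by
        rw [abs_mul, abs_of_nonneg (hw0 i)]
        exact mul_le_mul_of_nonneg_left (hx i) (hw0 i)
    _ = C := by rw [← Finset.sum_mul, hw1, one_mul]

lemma pow_stoch (M : Matrix S S ℝ) (h0 : ∀ s s', 0 ≤ M s s')
    (h1 : ∀ s, ∑ s', M s s' = 1) (t : ℕ) :
    (∀ s s', 0 ≤ (M ^ t) s s') ∧ ∀ s, ∑ s', (M ^ t) s s' = 1 := by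
  induction t with
  | zero =>
      constructor
      · intro s s'; simp [Matrix.one_apply]; split <;> norm_num
      · intro s; simp [Matrix.one_apply]
  | succ n ih =>
      constructor
      · intro s s'
        rw [pow_succ, Matrix.mul_apply]
        exact Finset.sum_nonneg fun k _ => mul_nonneg (ih.1 s k) (h0 k s')
      · intro s
        simp only [pow_succ, Matrix.mul_apply]
        rw [Finset.sum_comm]
        simp only [← Finset.mul_sum]
        simp [h1, ih.2 s]

lemma summable_geom_bound {γ : ℝ} (h0 : 0 ≤ γ) (h1 : γ < 1) (f : ℕ → ℝ) (C : ℝ)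
    (hf : ∀ t, |f t| ≤ C) : Summable (fun t => γ ^ t * f t) := by
  apply Summable.of_abs
  apply Summable.of_nonneg_of_le (fun t => abs_nonneg _) (fun t => ?_)
    ((summable_geometric_of_lt_one h0 h1).mul_right C)
  rw [abs_mul, abs_pow, abs_of_nonneg h0]
  exact mul_le_mul_of_nonneg_left (hf t) (pow_nonneg h0 t)

end helpers

section bellman

variable {S A : Type*} [Fintype S] [DecidableEq S] [Fintype A]

lemma trans_nonneg (P : S → A → S → ℝ) (hP0 : ∀ s a s', 0 ≤ P s a s')
    (pol : S → A → ℝ) (hpol0 : ∀ s a, 0 ≤ pol s a) (s s' : S) :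
    0 ≤ transMat P pol s s' :=
  Finset.sum_nonneg fun a _ => mul_nonneg (hpol0 s a) (hP0 s a s')

lemma trans_rowsum (P : S → A → S → ℝ) (hP1 : ∀ s a, ∑ s', P s a s' = 1)
    (pol : S → A → ℝ) (hpol1 : ∀ s, ∑ a, pol s a = 1) (s : S) :
    ∑ s', transMat P pol s s' = 1 := by
  unfold transMat
  calc ∑ s', ∑ a, pol s a * P s a s' = ∑ a, ∑ s', pol s a * P s a s' := Finset.sum_comm
    _ = ∑ a, pol s a * ∑ s', P s a s' := by simp [Finset.mul_sum]
    _ = 1 := by simp [hP1, hpol1 s]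

lemma Vfun_summable (P : S → A → S → ℝ) (hP0 : ∀ s a s', 0 ≤ P s a s')
    (hP1 : ∀ s a, ∑ s', P s a s' = 1) {γ : ℝ} (hγ0 : 0 ≤ γ) (hγ1 : γ < 1)
    (F : S → A → ℝ) (pol : S → A → ℝ) (hpol0 : ∀ s a, 0 ≤ pol s a)
    (hpol1 : ∀ s, ∑ a, pol s a = 1) (x : S) :
    Summable (fun t : ℕ => γ ^ t * ∑ s', (transMat P pol ^ t) x s' * ∑ a, pol s' a * F s' a) := by
  apply summable_geom_bound hγ0 hγ1 _ (∑ s', |∑ a, pol s' a * F s' a|)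
  intro t
  have hst := pow_stoch (transMat P pol) (trans_nonneg P hP0 pol hpol0)
    (trans_rowsum P hP1 pol hpol1) t
  exact weighted_abs_le _ _ (hst.1 x) (hst.2 x) _
    (fun i => Finset.single_le_sum (f := fun s' => |∑ a, pol s' a * F s' a|)
      (fun j _ => abs_nonneg _) (Finset.mem_univ i))

lemma Vfun_bellman (P : S → A → S → ℝ) (hP0 : ∀ s a s', 0 ≤ P s a s')
    (hP1 : ∀ s a, ∑ s', P s a s' = 1) {γ : ℝ} (hγ0 : 0 ≤ γ) (hγ1 : γ < 1)
    (F : S → A → ℝ) (pol : S → A → ℝ) (hpol0 : ∀ s a, 0 ≤ pol s a)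
    (hpol1 : ∀ s, ∑ a, pol s a = 1) (s : S) :
    Vfun P γ F pol s =
      (∑ a, pol s a * F s a) + γ * ∑ s', transMat P pol s s' * Vfun P γ F pol s' := by
  set M := transMat P pol with hMdef
  set r : S → ℝ := fun x => ∑ a, pol x a * F x a with hrdef
  set c : S → ℕ → ℝ := fun x t => ∑ s', (M ^ t) x s' * r s' with hcdef
  have hsum : ∀ x : S, Summable (fun t : ℕ => γ ^ t * c x t) :=
    fun x => Vfun_summable P hP0 hP1 hγ0 hγ1 F pol hpol0 hpol1 x
  have hV : ∀ x, Vfun P γ F pol x = ∑' t : ℕ, γ ^ t * c x t := fun x => rfl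
  have hc0 : c s 0 = r s := by
    simp [hcdef, Matrix.one_apply]
  have hcsucc : ∀ t, c s (t + 1) = ∑ k, M s k * c k t := by
    intro t
    simp only [hcdef, pow_succ', Matrix.mul_apply, Finset.sum_mul, Finset.mul_sum]
    rw [Finset.sum_comm]
    exact Finset.sum_congr rfl fun k _ => Finset.sum_congr rfl fun s' _ => by ring
  rw [hV s, Summable.tsum_eq_zero_add (hsum s)]
  simp only [pow_zero, one_mul, hc0]
  congr 1
  have h1 : ∀ t : ℕ, γ ^ (t + 1) * c s (t + 1) = ∑ k, γ * (M s k * (γ ^ t * c k t)) := by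
    intro t
    rw [hcsucc t, Finset.mul_sum]
    exact Finset.sum_congr rfl fun k _ => by ring
  simp only [h1]
  rw [Summable.tsum_finsetSum (fun k _ => ((hsum k).mul_left (M s k)).mul_left γ), Finset.mul_sum]
  exact Finset.sum_congr rfl fun k _ => by rw [tsum_mul_left, tsum_mul_left, hV k]

end bellman

set_option maxHeartbeats 1000000 in
/-- performance difference identity. -/
theorem performance_difference {S A : Type*} [Fintype S] [DecidableEq S] [Fintype A] [Nonempty S] [Nonempty A]
    (P : S → A → S → ℝ) (hP0 : ∀ s a s', 0 ≤ P s a s') (hP1 : ∀ s a, ∑ s', P s a s' = 1)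
    (γ : ℝ) (hγ0 : 0 < γ) (hγ1 : γ < 1)
    (ρ0 : S → ℝ) (hρ0 : ∀ s, 0 ≤ ρ0 s) (hρ1 : ∑ s, ρ0 s = 1)
    (pol : S → A → ℝ) (hpol0 : ∀ s a, 0 ≤ pol s a) (hpol1 : ∀ s, ∑ a, pol s a = 1) (pol' : S → A → ℝ) (hpol'0 : ∀ s a, 0 ≤ pol' s a) (hpol'1 : ∀ s, ∑ a, pol' s a = 1) (F : S → A → ℝ) :
    Jret P γ ρ0 F pol' - Jret P γ ρ0 F pol =
      (1 / (1 - γ)) * ∑ s, dVisit P γ ρ0 pol' s * ∑ a, pol' s a * Adv P γ F pol s a := by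
  have hγ0' : (0:ℝ) ≤ γ := le_of_lt hγ0
  have hγne : (1:ℝ) - γ ≠ 0 := by linarith
  set M' := transMat P pol' with hM'def
  have hM'0 : ∀ s s', 0 ≤ M' s s' := trans_nonneg P hP0 pol' hpol'0
  have hM'1 : ∀ s, ∑ s', M' s s' = 1 := trans_rowsum P hP1 pol' hpol'1
  set V : S → ℝ := fun s => Vfun P γ F pol s with hVdef
  set r' : S → ℝ := fun s => ∑ a, pol' s a * F s a with hr'def
  -- advantage identity
  have hg : ∀ s, (∑ a, pol' s a * Adv P γ F pol s a)
      = r' s + γ * ∑ s', M' s s' * V s' - V s := by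
    intro s
    have h2 : ∑ s', M' s s' * V s' = ∑ a, pol' s a * ∑ s', P s a s' * V s' := by
      simp only [hM'def, transMat, Finset.sum_mul, Finset.mul_sum]
      rw [Finset.sum_comm]
      exact Finset.sum_congr rfl fun a _ => Finset.sum_congr rfl fun s' _ => by ring
    simp only [Adv, Qfun, mul_sub, mul_add, hVdef, hr'def]
    rw [Finset.sum_sub_distrib, Finset.sum_add_distrib, ← Finset.sum_mul, hpol'1, one_mul,
      h2, Finset.mul_sum]
    congr 2
    exact Finset.sum_congr rfl fun a _ => by ring
  set ρt : ℕ → S → ℝ := fun t x => ∑ s0, ρ0 s0 * (M' ^ t) s0 x with hρtdef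
  have hstoch : ∀ t : ℕ, (∀ s s', 0 ≤ (M' ^ t) s s') ∧ ∀ s, ∑ s', (M' ^ t) s s' = 1 :=
    pow_stoch M' hM'0 hM'1
  have hρt0 : ∀ t x, 0 ≤ ρt t x := fun t x =>
    Finset.sum_nonneg fun s0 _ => mul_nonneg (hρ0 s0) ((hstoch t).1 s0 x)
  have hρt1 : ∀ t, ∑ x, ρt t x = 1 := by
    intro t
    simp only [hρtdef]
    rw [Finset.sum_comm]
    simp only [← Finset.mul_sum]
    simp [(hstoch t).2, hρ1]
  have hρtle : ∀ t x, ρt t x ≤ 1 := by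
    intro t x
    rw [← hρt1 t]
    exact Finset.single_le_sum (f := ρt t) (fun i _ => hρt0 t i) (Finset.mem_univ x)
  set b : ℕ → ℝ := fun t => ∑ x, ρt t x * V x with hbdef
  set a : ℕ → ℝ := fun t => ∑ x, ρt t x * r' x with hadef
  have hbbd : ∀ t, |b t| ≤ ∑ x, |V x| := fun t =>
    weighted_abs_le _ _ (hρt0 t) (hρt1 t) _
      (fun i => Finset.single_le_sum (f := fun x => |V x|) (fun j _ => abs_nonneg _) (Finset.mem_univ i))
  have habd : ∀ t, |a t| ≤ ∑ x, |r' x| := fun t =>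
    weighted_abs_le _ _ (hρt0 t) (hρt1 t) _
      (fun i => Finset.single_le_sum (f := fun x => |r' x|) (fun j _ => abs_nonneg _) (Finset.mem_univ i))
  have Sb : Summable (fun t : ℕ => γ ^ t * b t) := summable_geom_bound hγ0' hγ1 b _ hbbd
  have Sa : Summable (fun t : ℕ => γ ^ t * a t) := summable_geom_bound hγ0' hγ1 a _ habd
  -- step identity for visitation
  have hstep : ∀ t, ∑ x, ρt t x * ∑ s', M' x s' * V s' = b (t + 1) := by
    intro t
    simp only [hbdef, hρtdef, pow_succ, Matrix.mul_apply, Finset.mul_sum, Finset.sum_mul]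
    rw [Finset.sum_comm]
    refine Finset.sum_congr rfl fun x _ => ?_
    rw [Finset.sum_comm]
    exact Finset.sum_congr rfl fun s' _ => Finset.sum_congr rfl fun s0 _ => by ring
  -- inner sum at each time t
  have hinner : ∀ t : ℕ, ∑ s, ρt t s * ∑ a, pol' s a * Adv P γ F pol s a
      = a t + γ * b (t + 1) - b t := by
    intro t
    simp only [hg]
    rw [← hstep t, hadef, hbdef]
    rw [Finset.mul_sum, ← Finset.sum_add_distrib, ← Finset.sum_sub_distrib]
    exact Finset.sum_congr rfl fun s _ => by ring
  -- express the RHS sum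
  have hdv : ∀ s, dVisit P γ ρ0 pol' s = (1 - γ) * ∑' t : ℕ, γ ^ t * ρt t s := fun s => rfl
  have Sg : ∀ s, Summable (fun t : ℕ => γ ^ t * (ρt t s * (∑ a, pol' s a * Adv P γ F pol s a))) := by
    intro s
    apply summable_geom_bound hγ0' hγ1 _ (|∑ a, pol' s a * Adv P γ F pol s a|)
    intro t
    rw [abs_mul, abs_of_nonneg (hρt0 t s)]
    calc ρt t s * |∑ a, pol' s a * Adv P γ F pol s a|
        ≤ 1 * |∑ a, pol' s a * Adv P γ F pol s a| := by
          exact mul_le_mul_of_nonneg_right (hρtle t s) (abs_nonneg _)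
      _ = _ := one_mul _
  have hRHS : ∑ s, dVisit P γ ρ0 pol' s * ∑ a, pol' s a * Adv P γ F pol s a
      = (1 - γ) * ∑' t : ℕ, γ ^ t * (a t + γ * b (t + 1) - b t) := by
    have e1 : ∀ s, dVisit P γ ρ0 pol' s * ∑ a, pol' s a * Adv P γ F pol s a
        = (1 - γ) * ∑' t : ℕ, γ ^ t * (ρt t s * (∑ a, pol' s a * Adv P γ F pol s a)) := by
      intro s
      rw [hdv s, mul_assoc, ← tsum_mul_right]
      congr 1
      exact tsum_congr fun t => by ring
    simp only [e1]
    rw [← Finset.mul_sum]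
    congr 1
    rw [← Summable.tsum_finsetSum (fun s _ => Sg s)]
    refine tsum_congr fun t => ?_
    rw [← hinner t, Finset.mul_sum]
  -- tsum algebra
  have Sbsucc : Summable (fun t : ℕ => γ ^ (t + 1) * b (t + 1)) :=
    (summable_nat_add_iff 1).mpr Sb
  have htsum : ∑' t : ℕ, γ ^ t * (a t + γ * b (t + 1) - b t)
      = (∑' t : ℕ, γ ^ t * a t) + (∑' t : ℕ, γ ^ (t + 1) * b (t + 1)) - ∑' t : ℕ, γ ^ t * b t := by
    rw [← Summable.tsum_add Sa Sbsucc, ← Summable.tsum_sub (Sa.add Sbsucc) Sb]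
    exact tsum_congr fun t => by ring
  have hshift : ∑' t : ℕ, γ ^ (t + 1) * b (t + 1) = (∑' t : ℕ, γ ^ t * b t) - b 0 := by
    have := Summable.tsum_eq_zero_add Sb
    simp only [pow_zero, one_mul] at this
    linarith [this]
  -- identify a-series with Jret pol'
  have hJ' : Jret P γ ρ0 F pol' = ∑' t : ℕ, γ ^ t * a t := by
    unfold Jret
    have e : ∀ s, ρ0 s * Vfun P γ F pol' s
        = ∑' t : ℕ, ρ0 s * (γ ^ t * ∑ s', (M' ^ t) s s' * r' s') := by
      intro s
      rw [tsum_mul_left]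
      rfl
    simp only [e]
    rw [← Summable.tsum_finsetSum (fun s _ => (Vfun_summable P hP0 hP1 hγ0' hγ1 F pol' hpol'0 hpol'1 s).mul_left (ρ0 s))]
    refine tsum_congr fun t => ?_
    simp only [hadef, hρtdef, Finset.sum_mul, Finset.mul_sum]
    rw [Finset.sum_comm]
    refine Finset.sum_congr rfl fun s _ => Finset.sum_congr rfl fun s' _ => ?_
    simp only [hr'def, Finset.mul_sum]
    exact Finset.sum_congr rfl fun a _ => by ring
  -- identify b 0 with Jret pol
  have hb0 : b 0 = Jret P γ ρ0 F pol := by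
    simp only [hbdef, hρtdef, pow_zero, Matrix.one_apply, Jret, mul_ite, mul_one, mul_zero,
      Finset.sum_ite_eq', Finset.mem_univ, if_true, hVdef]
  rw [hRHS, htsum, hshift, ← hJ', hb0]
  field_simp
  ring
end

section
/- Policy performance lower bound (Lemma 3.1, lower inequality): in a finite discounted MDP, for any two policies π and π' with (π s a = 0 → π' s a = 0) and any signal F : S → A → ℝ, J_F(π') − J_F(π) ≥ (1/(1−γ)) · 𝔸_F(π,π') − (√2 · γ · ε_F(π,π') / (1−γ)²) · √(D̄_KL(π'‖π)). -/
open Real BigOperators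

/-!
The performance difference lemma writes `(1 - γ) (J_F(π') - J_F(π))` as the average of
`∑ₐ π'(s,a) A_F^π(s,a)` under `d_{π'}`, whereas the surrogate `𝔸_F(π,π')` averages the same
function under `d_π`; the error is at most `ε_F(π,π') ‖d_{π'} - d_π‖₁`. Both visitation
distributions are fixed points of `d = (1 - γ) ρ₀ + γ d P_π`, which gives
`‖d_{π'} - d_π‖₁ ≤ γ / (1 - γ) · 𝔼_{s ∼ d_π} ‖π'(s) - π(s)‖₁`, and Pinsker's inequality at each
state together with Jensen's inequality bounds this average by `√(2 D̄_KL(π'‖π))`.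
-/

open Finset Matrix InformationTheory

section Pinsker

theorem two_mul_sub_one_le_add_one_mul_log {t : ℝ} (ht : 1 ≤ t) :
    2 * (t - 1) ≤ (t + 1) * log t := by
  have h := Real.le_log_one_add_of_nonneg (sub_nonneg.mpr ht)
  rw [add_sub_cancel, div_le_iff₀ (by linarith)] at h
  linarith

theorem add_one_mul_log_le_two_mul_sub_one {t : ℝ} (h0 : 0 < t) (h1 : t ≤ 1) :
    (t + 1) * log t ≤ 2 * (t - 1) := by
  have h := two_mul_sub_one_le_add_one_mul_log (one_le_inv₀ h0 |>.mpr h1)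
  rw [log_inv] at h
  have := mul_le_mul_of_nonneg_left h h0.le
  field_simp at this
  linarith

theorem three_mul_sq_sub_one_le_klFun {t : ℝ} (ht : 0 ≤ t) :
    3 * (t - 1) ^ 2 ≤ 2 * (t + 2) * klFun t := by
  set f : ℝ → ℝ := fun t => 2 * (t + 2) * klFun t - 3 * (t - 1) ^ 2
  have hf : Continuous f := by fun_prop
  set f' : ℝ → ℝ := fun x => 4 * ((x + 1) * log x - 2 * (x - 1))
  have hf' : ∀ x, 0 < x → HasDerivAt f (f' x) x := by
    intro x hx
    have := ((((hasDerivAt_id' x).add_const 2).const_mul 2).mul (hasDerivAt_klFun hx.ne')).sub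
      ((((hasDerivAt_id' x).sub_const 1).pow 2).const_mul 3)
    exact this.congr_deriv (by rw [klFun_apply]; ring)
  suffices 0 ≤ f t by simp only [f] at this; linarith
  have hf1 : f 1 = 0 := by simp [f, klFun_one]
  rcases le_total t 1 with h | h
  · have hanti : AntitoneOn f (Set.Icc 0 1) := by
      refine antitoneOn_of_hasDerivWithinAt_nonpos (f' := f') (convex_Icc 0 1) hf.continuousOn
        (fun x hx => ?_) fun x hx => ?_
      all_goals rw [interior_Icc] at hx
      · exact (hf' x hx.1).hasDerivWithinAt
      · linarith [add_one_mul_log_le_two_mul_sub_one hx.1 hx.2.le]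
    exact hf1 ▸ hanti ⟨ht, h⟩ ⟨zero_le_one, le_rfl⟩ h
  · have hmono : MonotoneOn f (Set.Ici 1) := by
      refine monotoneOn_of_hasDerivWithinAt_nonneg (f' := f') (convex_Ici 1) hf.continuousOn
        (fun x hx => ?_) fun x hx => ?_
      all_goals rw [interior_Ici] at hx
      · exact (hf' x (zero_lt_one.trans hx)).hasDerivWithinAt
      · linarith [two_mul_sub_one_le_add_one_mul_log hx.le]
    exact hf1 ▸ hmono (Set.mem_Ici.mpr le_rfl) h h

theorem mul_klFun_div {x y : ℝ} (hxy : y = 0 → x = 0) :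
    y * klFun (x / y) = x * log (x / y) + y - x := by
  rcases eq_or_ne y 0 with rfl | hy
  · simp [hxy rfl]
  · rw [klFun_apply]
    field_simp

theorem three_mul_sq_sub_le_mul_klFun {x y : ℝ} (hx : 0 ≤ x) (hy : 0 ≤ y)
    (hxy : y = 0 → x = 0) : 3 * (x - y) ^ 2 ≤ (2 * x + 4 * y) * (y * klFun (x / y)) := by
  rcases hy.eq_or_lt with rfl | hy
  · simp [hxy rfl]
  calc 3 * (x - y) ^ 2 = y ^ 2 * (3 * (x / y - 1) ^ 2) := by field_simp
    _ ≤ y ^ 2 * (2 * (x / y + 2) * klFun (x / y)) :=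
        mul_le_mul_of_nonneg_left (three_mul_sq_sub_one_le_klFun (by positivity)) (sq_nonneg y)
    _ = (2 * x + 4 * y) * (y * klFun (x / y)) := by field_simp; ring

/-- Pinsker's inequality. -/
theorem sq_sum_abs_sub_le_two_mul_sum_mul_log {A : Type*} [Fintype A] {p q : A → ℝ}
    (hp : p ∈ stdSimplex ℝ A) (hq : q ∈ stdSimplex ℝ A) (hpq : ∀ a, q a = 0 → p a = 0) :
    (∑ a, |p a - q a|) ^ 2 ≤ 2 * ∑ a, p a * log (p a / q a) := by
  have hkl : ∑ a, p a * log (p a / q a) = ∑ a, q a * klFun (p a / q a) := by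
    simp only [mul_klFun_div (hpq _), sum_sub_distrib, sum_add_distrib, hp.2, hq.2]
    ring
  have hweights : ∑ a, (2 * p a + 4 * q a) / 3 = 2 := by
    rw [← sum_div, sum_add_distrib, ← mul_sum, ← mul_sum, hp.2, hq.2]
    norm_num
  calc (∑ a, |p a - q a|) ^ 2
      ≤ (∑ a, (2 * p a + 4 * q a) / 3) * ∑ a, q a * klFun (p a / q a) := by
        refine sum_sq_le_sum_mul_sum_of_sq_le_mul _ (fun a _ => ?_) (fun a _ => ?_) fun a _ => ?_
        · have := hp.1 a; have := hq.1 a; positivity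
        · exact mul_nonneg (hq.1 a) (klFun_nonneg (div_nonneg (hp.1 a) (hq.1 a)))
        · rw [sq_abs, div_mul_eq_mul_div, le_div_iff₀ three_pos]
          linarith [three_mul_sq_sub_le_mul_klFun (hp.1 a) (hq.1 a) (hpq a)]
    _ = 2 * ∑ a, p a * log (p a / q a) := by rw [hweights, hkl]

end Pinsker

section Stochastic

variable {m n : Type*} [Fintype m]

theorem sum_abs_vecMul_le [Fintype n] (v : m → ℝ) (N : Matrix m n ℝ) :
    ∑ j, |(v ᵥ* N) j| ≤ ∑ i, |v i| * ∑ j, |N i j| :=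
  calc ∑ j, |(v ᵥ* N) j| ≤ ∑ j, ∑ i, |v i| * |N i j| :=
        sum_le_sum fun j _ => (abs_sum_le_sum_abs _ _).trans_eq (by simp only [abs_mul])
    _ = ∑ i, |v i| * ∑ j, |N i j| := by rw [sum_comm]; simp only [mul_sum]

theorem abs_dotProduct_le_of_abs_le {v w : m → ℝ} {C : ℝ} (hw : ∀ i, |w i| ≤ C) :
    |v ⬝ᵥ w| ≤ (∑ i, |v i|) * C :=
  calc |v ⬝ᵥ w| ≤ ∑ i, |v i| * |w i| := (abs_sum_le_sum_abs _ _).trans_eq (by simp only [abs_mul])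
    _ ≤ ∑ i, |v i| * C := by gcongr with i; exact hw i
    _ = (∑ i, |v i|) * C := (sum_mul ..).symm

variable [DecidableEq m] {M : Matrix m m ℝ}

theorem sum_abs_vecMul_le_of_mem_rowStochastic (hM : M ∈ rowStochastic ℝ m) (v : m → ℝ) :
    ∑ j, |(v ᵥ* M) j| ≤ ∑ i, |v i| := by
  refine (sum_abs_vecMul_le v M).trans_eq (sum_congr rfl fun i _ => ?_)
  simp only [abs_of_nonneg (nonneg_of_mem_rowStochastic hM), sum_row_of_mem_rowStochastic hM,
    mul_one]

theorem abs_mulVec_le_of_mem_rowStochastic (hM : M ∈ rowStochastic ℝ m) (v : m → ℝ) (i : m) :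
    |(M *ᵥ v) i| ≤ ∑ j, |v j| :=
  calc |(M *ᵥ v) i| ≤ ∑ j, M i j * |v j| := (abs_sum_le_sum_abs _ _).trans_eq <| by
        simp only [abs_mul, abs_of_nonneg (nonneg_of_mem_rowStochastic hM)]
    _ ≤ ∑ j, |v j| := sum_le_sum fun j _ =>
        mul_le_of_le_one_left (abs_nonneg _) (le_one_of_mem_rowStochastic hM)

theorem vecMul_mem_stdSimplex (hM : M ∈ rowStochastic ℝ m) {v : m → ℝ}
    (hv : v ∈ stdSimplex ℝ m) : v ᵥ* M ∈ stdSimplex ℝ m :=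
  ⟨nonneg_vecMul_of_mem_rowStochastic hM hv.1, by
    rw [← dotProduct_one,
      vecMul_dotProduct_one_eq_one_rowStochastic hM (by rw [dotProduct_one, hv.2])]⟩

end Stochastic

section DiscountedSum

variable {S : Type*} {γ : ℝ} {u : ℕ → S → ℝ}

noncomputable def discountedSum (γ : ℝ) (u : ℕ → S → ℝ) : S → ℝ := fun s => ∑' t, γ ^ t * u t s

theorem summable_geometric_mul_of_abs_le (hγ0 : 0 ≤ γ) (hγ1 : γ < 1) {f : ℕ → ℝ} {C : ℝ}
    (hf : ∀ t, |f t| ≤ C) : Summable fun t => γ ^ t * f t :=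
  .of_norm_bounded ((summable_geometric_of_lt_one hγ0 hγ1).mul_right C) fun t => by
    rw [norm_mul, norm_pow, Real.norm_of_nonneg hγ0]
    exact mul_le_mul_of_nonneg_left (hf t) (by positivity)

section

variable (hu : ∀ s, Summable fun t => γ ^ t * u t s)
include hu

theorem dotProduct_discountedSum [Fintype S] (c : S → ℝ) :
    c ⬝ᵥ discountedSum γ u = ∑' t, γ ^ t * (c ⬝ᵥ u t) := by
  simp only [dotProduct, discountedSum, ← tsum_mul_left]
  rw [← Summable.tsum_finsetSum fun s _ => (hu s).mul_left (c s)]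
  simp only [mul_sum, mul_left_comm]

theorem discountedSum_vecMul [Fintype S] (M : Matrix S S ℝ) :
    discountedSum γ u ᵥ* M = discountedSum γ fun t => u t ᵥ* M := by
  ext s
  rw [vecMul, dotProduct_comm, dotProduct_discountedSum hu]
  simp only [discountedSum, vecMul, dotProduct_comm]

theorem discountedSum_eq_add :
    discountedSum γ u = u 0 + γ • discountedSum γ fun t => u (t + 1) := by
  ext s
  simp only [discountedSum, Pi.add_apply, Pi.smul_apply, smul_eq_mul, ← tsum_mul_left]
  rw [(hu s).tsum_eq_zero_add]
  simp only [pow_zero, one_mul, pow_succ, mul_assoc, mul_left_comm γ]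

end

theorem discountedSum_vecMul_pow [Fintype S] [DecidableEq S] {v : S → ℝ} {M : Matrix S S ℝ}
    (hu : ∀ s, Summable fun t => γ ^ t * (v ᵥ* M ^ t) s) :
    discountedSum γ (fun t => v ᵥ* M ^ t)
      = v + γ • (discountedSum γ (fun t => v ᵥ* M ^ t) ᵥ* M) := by
  conv_lhs => rw [discountedSum_eq_add hu]
  simp only [pow_zero, vecMul_one, pow_succ, ← vecMul_vecMul, discountedSum_vecMul hu]

end DiscountedSum

noncomputable def policyAvg {S A : Type*} [Fintype A] (pol f : S → A → ℝ) : S → ℝ :=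
  fun s => ∑ a, pol s a * f s a

section MDP

variable {S A : Type*} [Fintype S] [Fintype A] {P : S → A → S → ℝ} {γ : ℝ} {ρ0 : S → ℝ}
  {pol pol' : S → A → ℝ}

theorem sum_abs_transMat_sub_le (hP : ∀ s a, P s a ∈ stdSimplex ℝ S) (s : S) :
    ∑ s', |(transMat P pol' - transMat P pol) s s'| ≤ ∑ a, |pol' s a - pol s a| := by
  have hrow : (transMat P pol' - transMat P pol) s = (pol' s - pol s) ᵥ* P s := by
    ext s'
    simp only [Matrix.sub_apply, transMat, vecMul, dotProduct, Pi.sub_apply, sub_mul,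
      sum_sub_distrib]
  rw [hrow]
  refine (sum_abs_vecMul_le _ _).trans_eq (sum_congr rfl fun a _ => ?_)
  simp only [Pi.sub_apply, abs_of_nonneg ((hP s a).1 _), (hP s a).2, mul_one]

variable [DecidableEq S]

theorem transMat_mem_rowStochastic (hP : ∀ s a, P s a ∈ stdSimplex ℝ S)
    (hpol : ∀ s, pol s ∈ stdSimplex ℝ A) : transMat P pol ∈ rowStochastic ℝ S := by
  refine mem_rowStochastic_iff_sum.mpr ⟨fun s s' => sum_nonneg fun a _ =>
    mul_nonneg ((hpol s).1 a) ((hP s a).1 s'), fun s => ?_⟩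
  simp only [transMat]
  rw [sum_comm]
  simp only [← mul_sum, (hP _ _).2, mul_one, (hpol s).2]

theorem dVisit_eq_discountedSum :
    dVisit P γ ρ0 pol = (1 - γ) • discountedSum γ fun t => ρ0 ᵥ* transMat P pol ^ t :=
  rfl

theorem Vfun_eq_discountedSum (F : S → A → ℝ) :
    Vfun P γ F pol = discountedSum γ fun t => transMat P pol ^ t *ᵥ policyAvg pol F :=
  rfl

theorem Jret_eq_dotProduct (F : S → A → ℝ) : Jret P γ ρ0 F pol = ρ0 ⬝ᵥ Vfun P γ F pol :=
  rfl

variable (hP : ∀ s a, P s a ∈ stdSimplex ℝ S) (hγ0 : 0 ≤ γ) (hγ1 : γ < 1)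
  (hρ : ρ0 ∈ stdSimplex ℝ S)

include hP hρ in
theorem vecMul_transMat_pow_mem_stdSimplex (hpol : ∀ s, pol s ∈ stdSimplex ℝ A) (t : ℕ) :
    ρ0 ᵥ* transMat P pol ^ t ∈ stdSimplex ℝ S :=
  vecMul_mem_stdSimplex (pow_mem (transMat_mem_rowStochastic hP hpol) t) hρ

include hP hγ0 hγ1 hρ in
theorem summable_geometric_mul_vecMul_transMat_pow (hpol : ∀ s, pol s ∈ stdSimplex ℝ A) (s : S) :
    Summable fun t => γ ^ t * (ρ0 ᵥ* transMat P pol ^ t) s :=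
  summable_geometric_mul_of_abs_le hγ0 hγ1 (C := 1) fun t => by
    obtain ⟨h0, h1⟩ := mem_Icc_of_mem_stdSimplex (vecMul_transMat_pow_mem_stdSimplex hP hρ hpol t) s
    rwa [abs_of_nonneg h0]

include hP hγ0 hγ1 in
theorem summable_geometric_mul_transMat_pow_mulVec (hpol : ∀ s, pol s ∈ stdSimplex ℝ A)
    (F : S → A → ℝ) (s : S) :
    Summable fun t => γ ^ t * (transMat P pol ^ t *ᵥ policyAvg pol F) s :=
  summable_geometric_mul_of_abs_le hγ0 hγ1 fun t =>
    abs_mulVec_le_of_mem_rowStochastic (pow_mem (transMat_mem_rowStochastic hP hpol) t) _ s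

include hP hγ0 hγ1 hρ in
theorem dVisit_mem_stdSimplex (hpol : ∀ s, pol s ∈ stdSimplex ℝ A) :
    dVisit P γ ρ0 pol ∈ stdSimplex ℝ S := by
  have hsimplex := vecMul_transMat_pow_mem_stdSimplex hP hρ hpol
  have hsum :=
    dotProduct_discountedSum (summable_geometric_mul_vecMul_transMat_pow hP hγ0 hγ1 hρ hpol) 1
  simp only [one_dotProduct, (hsimplex _).2, mul_one, tsum_geometric_of_lt_one hγ0 hγ1] at hsum
  refine ⟨fun s => mul_nonneg (sub_nonneg.2 hγ1.le)
    (tsum_nonneg fun t => mul_nonneg (pow_nonneg hγ0 t) ((hsimplex t).1 s)), ?_⟩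
  rw [dVisit_eq_discountedSum]
  simp only [Pi.smul_apply, smul_eq_mul, ← mul_sum, hsum]
  exact mul_inv_cancel₀ (sub_ne_zero.2 hγ1.ne')

include hP hγ0 hγ1 hρ in
theorem dVisit_eq_add_vecMul (hpol : ∀ s, pol s ∈ stdSimplex ℝ A) :
    dVisit P γ ρ0 pol = (1 - γ) • ρ0 + γ • (dVisit P γ ρ0 pol ᵥ* transMat P pol) := by
  rw [dVisit_eq_discountedSum, smul_vecMul]
  conv_lhs =>
    rw [discountedSum_vecMul_pow (summable_geometric_mul_vecMul_transMat_pow hP hγ0 hγ1 hρ hpol)]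
  module

include hP hγ0 hγ1 hρ in
theorem dVisit_dotProduct_policyAvg (hpol : ∀ s, pol s ∈ stdSimplex ℝ A) (F : S → A → ℝ) :
    dVisit P γ ρ0 pol ⬝ᵥ policyAvg pol F = (1 - γ) * Jret P γ ρ0 F pol := by
  rw [dVisit_eq_discountedSum, smul_dotProduct, dotProduct_comm,
    dotProduct_discountedSum (summable_geometric_mul_vecMul_transMat_pow hP hγ0 hγ1 hρ hpol),
    Jret_eq_dotProduct, Vfun_eq_discountedSum,
    dotProduct_discountedSum (summable_geometric_mul_transMat_pow_mulVec hP hγ0 hγ1 hpol F),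
    smul_eq_mul]
  congr 2
  ext t
  rw [dotProduct_mulVec, dotProduct_comm]

theorem policyAvg_adv (hpol' : ∀ s, pol' s ∈ stdSimplex ℝ A) (F : S → A → ℝ) :
    policyAvg pol' (Adv P γ F pol)
      = policyAvg pol' F + γ • (transMat P pol' *ᵥ Vfun P γ F pol) - Vfun P γ F pol := by
  ext s
  have hstep : (transMat P pol' *ᵥ Vfun P γ F pol) s
      = ∑ a, pol' s a * ∑ s', P s a s' * Vfun P γ F pol s' :=
    (dotProduct_mulVec (pol' s) (P s) (Vfun P γ F pol)).symm
  simp only [policyAvg, Adv, Qfun, Pi.add_apply, Pi.sub_apply, Pi.smul_apply, smul_eq_mul, hstep,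
    mul_sub, mul_add, sum_sub_distrib, sum_add_distrib, ← sum_mul, (hpol' s).2, one_mul, mul_sum]
  simp only [mul_left_comm]

include hP hγ0 hγ1 hρ in
/-- The performance difference lemma. -/
theorem performance_difference_s4 (hpol' : ∀ s, pol' s ∈ stdSimplex ℝ A) (F : S → A → ℝ) :
    (1 - γ) * (Jret P γ ρ0 F pol' - Jret P γ ρ0 F pol)
      = dVisit P γ ρ0 pol' ⬝ᵥ policyAvg pol' (Adv P γ F pol) := by
  have hstat : γ * ((dVisit P γ ρ0 pol' ᵥ* transMat P pol') ⬝ᵥ Vfun P γ F pol)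
      = dVisit P γ ρ0 pol' ⬝ᵥ Vfun P γ F pol - (1 - γ) * Jret P γ ρ0 F pol := by
    rw [← smul_eq_mul, ← smul_dotProduct,
      eq_sub_of_add_eq' (dVisit_eq_add_vecMul hP hγ0 hγ1 hρ hpol').symm,
      sub_dotProduct, smul_dotProduct, smul_eq_mul, Jret_eq_dotProduct]
  rw [policyAvg_adv hpol', dotProduct_sub, dotProduct_add, dotProduct_smul, dotProduct_mulVec,
    smul_eq_mul, hstat, dVisit_dotProduct_policyAvg hP hγ0 hγ1 hρ hpol']
  ring

include hP hγ0 hγ1 hρ in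
theorem sum_abs_dVisit_sub_le (hpol : ∀ s, pol s ∈ stdSimplex ℝ A)
    (hpol' : ∀ s, pol' s ∈ stdSimplex ℝ A) :
    ∑ s, |dVisit P γ ρ0 pol' s - dVisit P γ ρ0 pol s|
      ≤ γ / (1 - γ) * ∑ s, dVisit P γ ρ0 pol s * ∑ a, |pol' s a - pol s a| := by
  set d := dVisit P γ ρ0 pol
  set d' := dVisit P γ ρ0 pol'
  set M := transMat P pol
  set M' := transMat P pol'
  have hd := dVisit_eq_add_vecMul hP hγ0 hγ1 hρ hpol
  have hd' := dVisit_eq_add_vecMul hP hγ0 hγ1 hρ hpol'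
  have he : d' - d = γ • ((d' - d) ᵥ* M') + γ • (d ᵥ* (M' - M)) := by
    rw [sub_vecMul, vecMul_sub]
    linear_combination (norm := module) hd' - hd
  have hpert : ∑ s, |(d ᵥ* (M' - M)) s| ≤ ∑ s, d s * ∑ a, |pol' s a - pol s a| :=
    (sum_abs_vecMul_le d (M' - M)).trans <| sum_le_sum fun s _ => by
      rw [abs_of_nonneg ((dVisit_mem_stdSimplex hP hγ0 hγ1 hρ hpol).1 s)]
      exact mul_le_mul_of_nonneg_left (sum_abs_transMat_sub_le hP s)
        ((dVisit_mem_stdSimplex hP hγ0 hγ1 hρ hpol).1 s)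
  have hrec :
      ∑ s, |(d' - d) s| ≤ γ * ∑ s, |(d' - d) s| + γ * ∑ s, d s * ∑ a, |pol' s a - pol s a| :=
    calc ∑ s, |(d' - d) s| ≤ ∑ s, (γ * |((d' - d) ᵥ* M') s| + γ * |(d ᵥ* (M' - M)) s|) := by
          refine sum_le_sum fun s _ => ?_
          rw [congrFun he s, Pi.add_apply, Pi.smul_apply, Pi.smul_apply, smul_eq_mul, smul_eq_mul]
          refine (abs_add_le _ _).trans_eq ?_
          rw [abs_mul, abs_mul, abs_of_nonneg hγ0]
      _ ≤ γ * ∑ s, |(d' - d) s| + γ * ∑ s, d s * ∑ a, |pol' s a - pol s a| := by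
          rw [sum_add_distrib, ← mul_sum, ← mul_sum]
          gcongr γ * ?_ + γ * ?_
          exact sum_abs_vecMul_le_of_mem_rowStochastic (transMat_mem_rowStochastic hP hpol') _
  simp only [Pi.sub_apply] at hrec
  rw [div_mul_eq_mul_div, le_div_iff₀ (sub_pos.2 hγ1)]
  linarith

end MDP

theorem sum_mul_sum_abs_sub_le_sqrt_two_mul_sum_mul_klState {S A : Type*} [Fintype S]
    [Fintype A] {w : S → ℝ} {pol pol' : S → A → ℝ} (hw : w ∈ stdSimplex ℝ S)
    (hpol : ∀ s, pol s ∈ stdSimplex ℝ A) (hpol' : ∀ s, pol' s ∈ stdSimplex ℝ A)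
    (habs : ∀ s a, pol s a = 0 → pol' s a = 0) :
    ∑ s, w s * ∑ a, |pol' s a - pol s a| ≤ √(2 * ∑ s, w s * klState pol' pol s) := by
  refine (le_abs_self _).trans (abs_le_sqrt ?_)
  calc (∑ s, w s * ∑ a, |pol' s a - pol s a|) ^ 2
      ≤ (∑ s, w s) * ∑ s, w s * (∑ a, |pol' s a - pol s a|) ^ 2 :=
        sum_sq_le_sum_mul_sum_of_sq_le_mul _ (fun s _ => hw.1 s)
          (fun s _ => mul_nonneg (hw.1 s) (sq_nonneg _)) fun s _ => le_of_eq (by ring)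
    _ ≤ ∑ s, w s * (2 * klState pol' pol s) := by
        rw [hw.2, one_mul]
        exact sum_le_sum fun s _ => mul_le_mul_of_nonneg_left
          (sq_sum_abs_sub_le_two_mul_sum_mul_log (hpol' s) (hpol s) (habs s)) (hw.1 s)
    _ = 2 * ∑ s, w s * klState pol' pol s := by
        rw [mul_sum]
        exact sum_congr rfl fun s _ => by ring

theorem performance_lower_bound_general {S A : Type*} [Fintype S] [DecidableEq S] [Fintype A] [Nonempty S]
    (P : S → A → S → ℝ) (hP0 : ∀ s a s', 0 ≤ P s a s') (hP1 : ∀ s a, ∑ s', P s a s' = 1)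
    (γ : ℝ) (hγ0 : 0 < γ) (hγ1 : γ < 1)
    (ρ0 : S → ℝ) (hρ0 : ∀ s, 0 ≤ ρ0 s) (hρ1 : ∑ s, ρ0 s = 1)
    (pol : S → A → ℝ) (hpol0 : ∀ s a, 0 ≤ pol s a) (hpol1 : ∀ s, ∑ a, pol s a = 1) (pol' : S → A → ℝ) (hpol'0 : ∀ s a, 0 ≤ pol' s a) (hpol'1 : ∀ s, ∑ a, pol' s a = 1)
    (habs : ∀ s a, pol s a = 0 → pol' s a = 0) (F : S → A → ℝ) :
    Jret P γ ρ0 F pol' - Jret P γ ρ0 F pol ≥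
      (1 / (1 - γ)) * surrAdv P γ ρ0 F pol pol'
        - (Real.sqrt 2 * γ * epsAdv P γ F pol pol' / (1 - γ) ^ 2) *
          Real.sqrt (avgKL P γ ρ0 pol' pol) := by
  have hP : ∀ s a, P s a ∈ stdSimplex ℝ S := fun s a => ⟨hP0 s a, hP1 s a⟩
  have hρ : ρ0 ∈ stdSimplex ℝ S := ⟨hρ0, hρ1⟩
  have hπ : ∀ s, pol s ∈ stdSimplex ℝ A := fun s => ⟨hpol0 s, hpol1 s⟩
  have hπ' : ∀ s, pol' s ∈ stdSimplex ℝ A := fun s => ⟨hpol'0 s, hpol'1 s⟩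
  have hγ : 0 < 1 - γ := sub_pos.2 hγ1
  have hpdl := performance_difference_s4 (pol := pol) hP hγ0.le hγ1 hρ hπ' F
  have hl1 := sum_abs_dVisit_sub_le hP hγ0.le hγ1 hρ hπ hπ'
  have hpinsker := sum_mul_sum_abs_sub_le_sqrt_two_mul_sum_mul_klState
    (dVisit_mem_stdSimplex hP hγ0.le hγ1 hρ hπ) hπ hπ' habs
  set d := dVisit P γ ρ0 pol
  set d' := dVisit P γ ρ0 pol'
  set g := policyAvg pol' (Adv P γ F pol)
  set ε := epsAdv P γ F pol pol'
  set K := √(avgKL P γ ρ0 pol' pol)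
  have hg : ∀ s, |g s| ≤ ε := fun s => le_sup' (fun s => |g s|) (mem_univ s)
  have hε : 0 ≤ ε := (abs_nonneg _).trans (hg (Classical.arbitrary S))
  have hshift : |(d' - d) ⬝ᵥ g| ≤ (∑ s, |d' s - d s|) * ε := abs_dotProduct_le_of_abs_le hg
  rw [sub_dotProduct] at hshift
  have hdist : ∑ s, |d' s - d s| ≤ γ / (1 - γ) * (√2 * K) := by
    rw [← sqrt_mul zero_le_two]
    exact hl1.trans (mul_le_mul_of_nonneg_left hpinsker (by positivity))
  have hsurr : surrAdv P γ ρ0 F pol pol' = d ⬝ᵥ g := rfl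
  rw [ge_iff_le, hsurr, ← mul_le_mul_iff_of_pos_left hγ, hpdl]
  calc (1 - γ) * (1 / (1 - γ) * (d ⬝ᵥ g) - √2 * γ * ε / (1 - γ) ^ 2 * K)
      = d ⬝ᵥ g - ε * (γ / (1 - γ) * (√2 * K)) := by field_simp
    _ ≤ d ⬝ᵥ g - ε * ∑ s, |d' s - d s| := by gcongr
    _ ≤ d' ⬝ᵥ g := by linarith [(abs_le.1 hshift).1]

/-- policy performance bound (Lemma 3.1, lower inequality). -/
theorem performance_lower_bound {S A : Type*} [Fintype S] [DecidableEq S] [Fintype A] [Nonempty S] [Nonempty A]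
    (P : S → A → S → ℝ) (hP0 : ∀ s a s', 0 ≤ P s a s') (hP1 : ∀ s a, ∑ s', P s a s' = 1)
    (γ : ℝ) (hγ0 : 0 < γ) (hγ1 : γ < 1)
    (ρ0 : S → ℝ) (hρ0 : ∀ s, 0 ≤ ρ0 s) (hρ1 : ∑ s, ρ0 s = 1)
    (pol : S → A → ℝ) (hpol0 : ∀ s a, 0 ≤ pol s a) (hpol1 : ∀ s, ∑ a, pol s a = 1) (pol' : S → A → ℝ) (hpol'0 : ∀ s a, 0 ≤ pol' s a) (hpol'1 : ∀ s, ∑ a, pol' s a = 1)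
    (habs : ∀ s a, pol s a = 0 → pol' s a = 0) (F : S → A → ℝ) :
    Jret P γ ρ0 F pol' - Jret P γ ρ0 F pol ≥
      (1 / (1 - γ)) * surrAdv P γ ρ0 F pol pol'
        - (Real.sqrt 2 * γ * epsAdv P γ F pol pol' / (1 - γ) ^ 2) *
          Real.sqrt (avgKL P γ ρ0 pol' pol) :=
  performance_lower_bound_general P hP0 hP1 γ hγ0 hγ1 ρ0 hρ0 hρ1 pol hpol0 hpol1 pol' hpol'0 hpol'1
    habs F
end
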